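/- arXiv:math/0206042 — 3 statements merged into one kernel-verified Lean document; each statement's English description precedes it below -/
import Mathlib

section
/- Let H be a complex Hilbert space, let N be a normal bounded operator on H, and let P be a bounded operator on H with N P = P N. Then N* P = P N* as well. -/
/-- Fuglede's theorem: if a bounded operator `P` on a complex Hilbert space commutes with a
normal bounded operator `N`, then `P` also commutes with the adjoint `N*`. -/
theorem stmt3 {H : Type*} [NormedAddCommGroup H] [InnerProductSpace ℂ H] [CompleteSpace H]
    (N P : H →L[ℂ] H) (hN : IsStarNormal N)
    (h : N ∘L P = P ∘L N) :
    ContinuousLinearMap.adjoint N ∘L P = P ∘L ContinuousLinearMap.adjoint N :=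
  (hN.commute_star_left h).eq
end

section
/- Let Ω be a compact Hausdorff space, ν a complex regular Borel measure on Ω, H = L²(|ν|), and A a closed unital point-separating subalgebra of C(Ω). Let K be the closure of (the image of) A in H, and suppose there exists a bounded projection P : H → H with range K satisfying M_f P = P M_f for all f ∈ A, where M_f is multiplication by f. Then K = H. -/
open MeasureTheory

/-- A complex regular Borel measure, encoded via its polar decomposition. -/
structure ComplexRegularBorelMeasure (Ω : Type*) [TopologicalSpace Ω] [MeasurableSpace Ω] where
  variation : Measure Ω
  polar : Ω → ℂ
  finite : IsFiniteMeasure variation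
  regular : variation.Regular
  measurable_polar : Measurable polar
  norm_polar : ∀ᵐ x ∂variation, ‖polar x‖ = 1

/-- `T` is the operator of multiplication by `f` on `L²(μ)`. -/
def IsMulOp {Ω : Type*} [MeasurableSpace Ω] (μ : Measure Ω) (f : Ω → ℂ)
    (T : Lp ℂ 2 μ →L[ℂ] Lp ℂ 2 μ) : Prop :=
  ∀ ξ : Lp ℂ 2 μ, (⇑(T ξ) : Ω → ℂ) =ᵐ[μ] fun x => f x * ξ x

/-!
Every operator `M_g` of multiplication by `g ∈ C(Ω)` on `L²` commutes with `P`. Indeed, the `g`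
with `M_g P = P M_g` form a closed subalgebra of `C(Ω)` containing `A`; it is closed under
conjugation by Fuglede's theorem, proved here by Rosenblum's argument: for `M = M_{conj g}` and
`N = M_g`, the entire function `z ↦ exp(-zM) P exp(zM) = exp(z̄N - zM) P exp(zM - z̄N)` is
bounded because `z̄g - z conj g` is purely imaginary, hence constant by Liouville, and its
derivative at `0` is `PM - MP`. By Stone–Weierstrass this subalgebra is all of `C(Ω)`. Then
`g = M_g 1 = M_g P 1 = P (M_g 1)` lies in `K` for every continuous `g`, and continuous functions
are dense in `L²`.
-/

open NormedSpace
open scoped ENNReal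

section

variable {B : Type*} [NormedRing B] [NormedAlgebra ℂ B] [CompleteSpace B]

theorem commute_of_isBounded_range_exp_conj {M T : B}
    (hF : Bornology.IsBounded (Set.range fun z : ℂ => exp ((-z) • M) * T * exp (z • M))) :
    Commute M T := by
  let : NormedAlgebra ℚ B := .restrictScalars ℚ ℂ B
  have hexp : Differentiable ℂ fun z : ℂ => exp (z • M) :=
    fun z => (hasDerivAt_exp_smul_const M z).differentiableAt
  have hconst (z : ℂ) : T * exp (z • M) = exp (z • M) * T := by
    have h := (((hexp.comp differentiable_neg).mul_const T).mul hexp).apply_eq_apply_of_bounded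
      hF z 0
    simp only [Pi.mul_apply, Function.comp_apply, neg_zero, zero_smul, exp_zero, one_mul,
      mul_one] at h
    conv_rhs => rw [← h]
    rw [← mul_assoc, ← mul_assoc,
      ← exp_add_of_commute ((Commute.refl M).smul_left _ |>.smul_right _), neg_smul,
      add_neg_cancel, exp_zero, one_mul]
  have hderiv := (hasDerivAt_exp_smul_const' M (0 : ℂ)).const_mul T
  rw [funext hconst] at hderiv
  show M * T = T * M
  simpa using (hderiv.unique ((hasDerivAt_exp_smul_const' M (0 : ℂ)).mul_const T)).symm

theorem norm_exp_le_one_of_mem_skewAdjoint {C : Type*} [NormedRing C] [StarRing C] [CStarRing C]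
    [NormedAlgebra ℚ C] [CompleteSpace C] {k : C} (hk : k ∈ skewAdjoint C) :
    ‖exp k‖ ≤ 1 := by
  rcases subsingleton_or_nontrivial C with _ | _
  · simp [Subsingleton.elim (exp k) 0]
  · exact (CStarRing.norm_of_mem_unitary (exp_mem_unitary_of_mem_skewAdjoint hk)).le

variable {C : Type*} [NormedRing C] [StarRing C] [CStarRing C] [NormedAlgebra ℂ C]
  [StarModule ℂ C] [CompleteSpace C]

theorem commute_map_star_of_commute_map (Φ : C →ₐ[ℂ] B) (hΦ : Continuous Φ) {g : C}
    [IsStarNormal g] {T : B} (h : Commute (Φ g) T) : Commute (Φ (star g)) T := by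
  let : NormedAlgebra ℚ B := .restrictScalars ℚ ℂ B
  let : NormedAlgebra ℚ C := .restrictScalars ℚ ℂ C
  let L : C →L[ℂ] B := ⟨Φ.toLinearMap, hΦ⟩
  have hbound {k : C} (hk : k ∈ skewAdjoint C) : ‖Φ (exp k)‖ ≤ ‖L‖ :=
    (L.le_opNorm (exp k)).trans <|
      mul_le_of_le_one_right (norm_nonneg L) (norm_exp_le_one_of_mem_skewAdjoint hk)
  have hMN : Commute (Φ (star g)) (Φ g) := (star_comm_self (x := g)).map Φ
  refine commute_of_isBounded_range_exp_conj <|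
    isBounded_iff_forall_norm_le.mpr ⟨‖L‖ * ‖T‖ * ‖L‖, ?_⟩
  rintro _ ⟨z, rfl⟩
  have hT : exp (star z • Φ g) * T * exp (-(star z • Φ g)) = T := by
    simpa using ((h.symm.smul_right (star z)).neg_right).exp_neg_mul_mul_exp_eq_self
  have key : exp ((-z) • Φ (star g)) * T * exp (z • Φ (star g)) =
      Φ (exp ((-z) • star g + star z • g)) * T * Φ (exp (-(star z • g) + z • star g)) := by
    rw [map_exp Φ hΦ, map_exp Φ hΦ]
    simp only [map_add, map_neg, map_smul]
    rw [exp_add_of_commute ((hMN.smul_left _).smul_right _),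
      exp_add_of_commute (((hMN.symm.smul_left _).neg_left).smul_right _)]
    conv_lhs => rw [← hT]
    simp only [mul_assoc]
  have hk₁ : (-z) • star g + star z • g ∈ skewAdjoint C := by
    rw [skewAdjoint.mem_iff]; simp [star_smul, add_comm]
  have hk₂ : -(star z • g) + z • star g ∈ skewAdjoint C := by
    rw [skewAdjoint.mem_iff]; simp [star_smul, add_comm]
  dsimp only
  rw [key]
  calc _ ≤ _ := norm_mul₃_le
    _ ≤ ‖L‖ * ‖T‖ * ‖L‖ := by gcongr; exacts [hbound hk₁, hbound hk₂]

theorem ContinuousMap.commute_map_of_separatesPoints {X : Type*} [TopologicalSpace X]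
    [CompactSpace X] [T2Space X] (Φ : C(X, ℂ) →ₐ[ℂ] B) (hΦ : Continuous Φ)
    (A : Subalgebra ℂ C(X, ℂ)) (hsep : ∀ x y : X, x ≠ y → ∃ f ∈ A, f x ≠ f y) {T : B}
    (hT : ∀ f ∈ A, Commute (Φ f) T) (g : C(X, ℂ)) : Commute (Φ g) T := by
  let S₀ := (Subalgebra.centralizer ℂ {T}).comap Φ
  have hmem (f : C(X, ℂ)) : f ∈ S₀ ↔ Commute (Φ f) T := by
    simp [S₀, Subalgebra.mem_centralizer_iff, commute_iff_eq, eq_comm]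
  let S : StarSubalgebra ℂ C(X, ℂ) :=
    { S₀ with
      star_mem' := fun {f} hf =>
        have : IsStarNormal f := ⟨Commute.all _ _⟩
        (hmem _).2 (commute_map_star_of_commute_map Φ hΦ ((hmem f).1 hf)) }
  have hS_closed : IsClosed (S : Set C(X, ℂ)) := (Set.isClosed_centralizer {T}).preimage hΦ
  have hS_sep : S.SeparatesPoints := by
    intro x y hxy
    obtain ⟨f, hfA, hf⟩ := hsep x y hxy
    exact ⟨f, ⟨f, (hmem f).2 (hT f hfA), rfl⟩, hf⟩
  have hg : g ∈ closure (S : Set C(X, ℂ)) := by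
    rw [← StarSubalgebra.topologicalClosure_coe,
      ContinuousMap.starSubalgebra_topologicalClosure_eq_top_of_separatesPoints S hS_sep]
    trivial
  rw [hS_closed.closure_eq] at hg
  exact (hmem g).1 hg

end

namespace ContinuousMap

variable {Ω : Type*} [TopologicalSpace Ω] [CompactSpace Ω] [MeasurableSpace Ω] [BorelSpace Ω]
  (μ : Measure Ω) [IsFiniteMeasure μ]

noncomputable def mulL2 : C(Ω, ℂ) →L[ℂ] Lp ℂ 2 μ →L[ℂ] Lp ℂ 2 μ :=
  (ContinuousLinearMap.mul ℂ ℂ).holderL μ ∞ 2 2 ∘L toLp ∞ μ ℂ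

variable {μ}

lemma coeFn_mulL2 (g : C(Ω, ℂ)) (ξ : Lp ℂ 2 μ) :
    mulL2 μ g ξ =ᵐ[μ] fun x => g x * ξ x := by
  filter_upwards [(ContinuousLinearMap.mul ℂ ℂ).coeFn_holder (r := 2) (toLp ∞ μ ℂ g) ξ,
    coeFn_toLp (p := ∞) (𝕜 := ℂ) μ g] with x hx hg
  rw [mulL2, ContinuousLinearMap.comp_apply, ContinuousLinearMap.holderL_apply_apply, hx, hg,
    ContinuousLinearMap.mul_apply']

variable (μ) in
lemma mulL2_one : mulL2 μ (1 : C(Ω, ℂ)) = 1 := by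
  ext1 ξ
  refine Lp.ext ?_
  filter_upwards [coeFn_mulL2 1 ξ] with x hx
  simp [hx]

lemma mulL2_mul (g h : C(Ω, ℂ)) : mulL2 μ (g * h) = mulL2 μ g * mulL2 μ h := by
  ext1 ξ
  refine Lp.ext ?_
  filter_upwards [coeFn_mulL2 (g * h) ξ, coeFn_mulL2 g (mulL2 μ h ξ), coeFn_mulL2 h ξ]
    with x h₁ h₂ h₃
  simp [h₁, h₂, h₃, mul_assoc]

variable (μ) in
noncomputable def mulL2AlgHom : C(Ω, ℂ) →ₐ[ℂ] (Lp ℂ 2 μ →L[ℂ] Lp ℂ 2 μ) :=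
  .ofLinearMap (mulL2 μ).toLinearMap (mulL2_one μ) mulL2_mul

@[simp]
lemma mulL2AlgHom_apply (g : C(Ω, ℂ)) : mulL2AlgHom μ g = mulL2 μ g := rfl

lemma mulL2_toLp_one (g : C(Ω, ℂ)) : mulL2 μ g (toLp 2 μ ℂ 1) = toLp 2 μ ℂ g := by
  refine Lp.ext ?_
  filter_upwards [coeFn_mulL2 g (toLp 2 μ ℂ 1), coeFn_toLp (p := 2) (𝕜 := ℂ) μ (1 : C(Ω, ℂ)),
    coeFn_toLp (p := 2) (𝕜 := ℂ) μ g] with x h₁ h₂ h₃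
  rw [h₁, h₂, h₃, one_apply, mul_one]

end ContinuousMap

theorem stmt12_general {Ω : Type*} [TopologicalSpace Ω] [CompactSpace Ω] [T2Space Ω]
    [MeasurableSpace Ω] [BorelSpace Ω] (ν : ComplexRegularBorelMeasure Ω)
    (A : Subalgebra ℂ C(Ω, ℂ))
    (hsep : ∀ x y : Ω, x ≠ y → ∃ f ∈ A, f x ≠ f y)
    (P : Lp ℂ 2 ν.variation →L[ℂ] Lp ℂ 2 ν.variation)
    (hrange : ∀ ξ, P ξ ∈ closure {ξ : Lp ℂ 2 ν.variation |
      ∃ f ∈ A, (⇑ξ : Ω → ℂ) =ᵐ[ν.variation] ⇑f})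
    (hproj : ∀ ξ ∈ closure {ξ : Lp ℂ 2 ν.variation |
      ∃ f ∈ A, (⇑ξ : Ω → ℂ) =ᵐ[ν.variation] ⇑f}, P ξ = ξ)
    (hcomm : ∀ f ∈ A, ∀ T : Lp ℂ 2 ν.variation →L[ℂ] Lp ℂ 2 ν.variation,
      IsMulOp ν.variation (⇑f) T → T ∘L P = P ∘L T) :
    closure {ξ : Lp ℂ 2 ν.variation | ∃ f ∈ A, (⇑ξ : Ω → ℂ) =ᵐ[ν.variation] ⇑f} =
      Set.univ := by
  have : IsFiniteMeasure ν.variation := ν.finite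
  have : ν.variation.Regular := ν.regular
  set K := closure {ξ : Lp ℂ 2 ν.variation | ∃ f ∈ A, (⇑ξ : Ω → ℂ) =ᵐ[ν.variation] ⇑f}
  have hP (g : C(Ω, ℂ)) : Commute (ContinuousMap.mulL2AlgHom ν.variation g) P :=
    ContinuousMap.commute_map_of_separatesPoints _ (ContinuousMap.mulL2 ν.variation).continuous
      A hsep (fun f hf => by
        rw [ContinuousMap.mulL2AlgHom_apply]
        exact hcomm f hf _ (ContinuousMap.coeFn_mulL2 f)) g
  have hone : ContinuousMap.toLp 2 ν.variation ℂ 1 ∈ K :=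
    subset_closure ⟨1, A.one_mem, ContinuousMap.coeFn_toLp _ _⟩
  have hcont (g : C(Ω, ℂ)) : ContinuousMap.toLp 2 ν.variation ℂ g ∈ K := by
    rw [← ContinuousMap.mulL2_toLp_one, ← hproj _ hone]
    exact (congrArg (· (ContinuousMap.toLp 2 ν.variation ℂ 1)) (hP g)).symm ▸ hrange _
  exact (dense_closure.1 <| (ContinuousMap.toLp_denseRange ℂ ν.variation ℂ (p := 2)
    ENNReal.ofNat_ne_top).mono (Set.range_subset_iff.2 hcont)).closure_eq

/-- Analytic core of Sheĭnberg's theorem: let `K` be the closure of a closed unital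
point-separating subalgebra `A` of `C(Ω)` in `H = L²(|ν|)`, and suppose there is a bounded
projection `P : H → H` with range `K` commuting with multiplication by every `f ∈ A`.
Then `K = H`. -/
theorem stmt12 {Ω : Type*} [TopologicalSpace Ω] [CompactSpace Ω] [T2Space Ω]
    [MeasurableSpace Ω] [BorelSpace Ω] (ν : ComplexRegularBorelMeasure Ω)
    (A : Subalgebra ℂ C(Ω, ℂ)) (hA : IsClosed (A : Set C(Ω, ℂ)))
    (hsep : ∀ x y : Ω, x ≠ y → ∃ f ∈ A, f x ≠ f y)
    (P : Lp ℂ 2 ν.variation →L[ℂ] Lp ℂ 2 ν.variation)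
    (hrange : ∀ ξ, P ξ ∈ closure {ξ : Lp ℂ 2 ν.variation |
      ∃ f ∈ A, (⇑ξ : Ω → ℂ) =ᵐ[ν.variation] ⇑f})
    (hproj : ∀ ξ ∈ closure {ξ : Lp ℂ 2 ν.variation |
      ∃ f ∈ A, (⇑ξ : Ω → ℂ) =ᵐ[ν.variation] ⇑f}, P ξ = ξ)
    (hcomm : ∀ f ∈ A, ∀ T : Lp ℂ 2 ν.variation →L[ℂ] Lp ℂ 2 ν.variation,
      IsMulOp ν.variation (⇑f) T → T ∘L P = P ∘L T) :
    closure {ξ : Lp ℂ 2 ν.variation | ∃ f ∈ A, (⇑ξ : Ω → ℂ) =ᵐ[ν.variation] ⇑f} =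
      Set.univ :=
  stmt12_general ν A hsep P hrange hproj hcomm
end

section
/- Let Ω be a compact Hausdorff space, ν a complex regular Borel measure on Ω annihilating a closed unital point-separating subalgebra A of C(Ω), and suppose there exists a bounded projection P from L²(|ν|) onto the closure of A in L²(|ν|) commuting with multiplication by every element of A. Then ν = 0. -/
open MeasureTheory

/-- The integral of a function against the complex measure. -/
noncomputable def ComplexRegularBorelMeasure.integral {Ω : Type*} [TopologicalSpace Ω]
    [MeasurableSpace Ω] (ν : ComplexRegularBorelMeasure Ω) (f : Ω → ℂ) : ℂ :=
  ∫ x, f x * ν.polar x ∂ν.variation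

/-!
Let `k = conj (dν/d|ν|) ∈ L²(|ν|)`, so that `∫ ξ dν = ⟪k, ξ⟫`. Multiplication `g ↦ M_g` is a
star homomorphism from `C(Ω)` into the bounded operators, so by Fuglede's theorem the `g` with
`M_g P = P M_g` form a closed star subalgebra; it contains `A`, hence is all of `C(Ω)` by
Stone–Weierstrass. Then `∫ g dν = ⟪k, M_g 1⟫ = ⟪k, M_g P 1⟫ = ⟪k, P (M_g 1)⟫ = 0`, because `k`
annihilates `A` and therefore its `L²`-closure, which contains the range of `P`. So `ν` annihilates
`C(Ω)`, which is dense in `L²(|ν|)`, and `ν = 0`.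
-/

open scoped ENNReal InnerProductSpace CStarAlgebra ComplexConjugate

section Commutant

variable {Ω B : Type*} [TopologicalSpace Ω] [CompactSpace Ω] [CStarAlgebra B]

theorem commute_map_of_separatesPoints (φ : C(Ω, ℂ) →⋆ₐ[ℂ] B) {A : Subalgebra ℂ C(Ω, ℂ)}
    (hA : A.SeparatesPoints) {T : B} (hT : ∀ g ∈ A, Commute (φ g) T) (g : C(Ω, ℂ)) :
    Commute (φ g) T := by
  let C := (StarSubalgebra.centralizer ℂ {T}).comap φ
  have hAC : StarAlgebra.adjoin ℂ (A : Set C(Ω, ℂ)) ≤ C := by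
    refine StarAlgebra.adjoin_le fun f hf => ?_
    have hnormal : IsStarNormal (φ f) :=
      ⟨by simpa only [map_star] using (Commute.all (star f) f).map φ⟩
    refine (StarSubalgebra.mem_centralizer_iff ℂ).2 fun t ht => ?_
    rw [Set.mem_singleton_iff.1 ht]
    refine ⟨(hT f hf).eq.symm, ?_⟩
    simpa using congr(star $((hnormal.commute_star_left (hT f hf)).eq))
  have hCclosed : IsClosed (C : Set C(Ω, ℂ)) :=
    (Set.isClosed_centralizer _).preimage (map_continuous φ)
  have hCtop : C = ⊤ := by
    rw [eq_top_iff, ← ContinuousMap.starSubalgebra_topologicalClosure_eq_top_of_separatesPoints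
      _ (Subalgebra.separatesPoints_monotone (fun _ hf => StarAlgebra.subset_adjoin ℂ _ hf) hA)]
    exact StarSubalgebra.topologicalClosure_minimal hAC hCclosed
  have hg : φ g ∈ StarSubalgebra.centralizer ℂ {T} := by
    change g ∈ C
    rw [hCtop]
    trivial
  exact ((StarSubalgebra.mem_centralizer_iff ℂ).1 hg T rfl).1.symm

end Commutant

section MulOp

variable {Ω : Type*} [TopologicalSpace Ω] [CompactSpace Ω] [MeasurableSpace Ω] [BorelSpace Ω]
  {μ : Measure Ω} [IsFiniteMeasure μ]

variable (μ) in
noncomputable def mulOpL : C(Ω, ℂ) →L[ℂ] Lp ℂ 2 μ →L[ℂ] Lp ℂ 2 μ :=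
  (ContinuousLinearMap.mul ℂ ℂ).holderL μ ∞ 2 2 ∘L ContinuousMap.toLp ∞ μ ℂ

theorem isMulOp_mulOpL (g : C(Ω, ℂ)) : IsMulOp μ g (mulOpL μ g) := fun ξ => by
  filter_upwards [(ContinuousLinearMap.mul ℂ ℂ).coeFn_holder (r := 2)
    (ContinuousMap.toLp ∞ μ ℂ g) ξ, ContinuousMap.coeFn_toLp (p := ∞) μ (𝕜 := ℂ) g] with x h1 h2
  simp only [mulOpL, ContinuousLinearMap.comp_apply, ContinuousLinearMap.holderL_apply_apply, h1,
    h2, ContinuousLinearMap.mul_apply']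

theorem mulOpL_one : mulOpL μ (1 : C(Ω, ℂ)) = 1 := by
  ext ξ : 2
  filter_upwards [isMulOp_mulOpL 1 ξ] with x hx
  simpa using hx

theorem mulOpL_mul (g h : C(Ω, ℂ)) : mulOpL μ (g * h) = mulOpL μ g * mulOpL μ h := by
  ext ξ : 2
  filter_upwards [isMulOp_mulOpL (g * h) ξ, isMulOp_mulOpL h ξ,
    isMulOp_mulOpL g (mulOpL μ h ξ)] with x hgh hh hg
  rw [mul_apply_eq_comp, hgh, hg, hh, ContinuousMap.mul_apply, mul_assoc]

theorem mulOpL_star (g : C(Ω, ℂ)) : mulOpL μ (star g) = star (mulOpL μ g) := by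
  rw [ContinuousLinearMap.star_eq_adjoint, ContinuousLinearMap.eq_adjoint_iff]
  intro ξ η
  rw [L2.inner_def, L2.inner_def]
  refine integral_congr_ae ?_
  filter_upwards [isMulOp_mulOpL (star g) ξ, isMulOp_mulOpL g η] with x hξ hη
  simp only [hξ, hη, RCLike.inner_apply, ContinuousMap.star_apply, RCLike.star_def, map_mul,
    Complex.conj_conj]
  ring

variable (μ) in
noncomputable def mulOp : C(Ω, ℂ) →⋆ₐ[ℂ] (Lp ℂ 2 μ →L[ℂ] Lp ℂ 2 μ) where
  toFun := mulOpL μ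
  map_one' := mulOpL_one
  map_mul' := mulOpL_mul
  map_zero' := map_zero _
  map_add' := map_add _
  commutes' c := by simp [Algebra.algebraMap_eq_smul_one, mulOpL_one]
  map_star' := mulOpL_star

theorem isMulOp_mulOp (g : C(Ω, ℂ)) : IsMulOp μ g (mulOp μ g) :=
  isMulOp_mulOpL g

theorem mulOp_apply_toLp (g h : C(Ω, ℂ)) :
    mulOp μ g (ContinuousMap.toLp 2 μ ℂ h) = ContinuousMap.toLp 2 μ ℂ (g * h) := by
  apply Lp.ext
  filter_upwards [isMulOp_mulOp g (ContinuousMap.toLp 2 μ ℂ h),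
    ContinuousMap.coeFn_toLp (p := 2) μ (𝕜 := ℂ) h,
    ContinuousMap.coeFn_toLp (p := 2) μ (𝕜 := ℂ) (g * h)] with x hg hh hgh
  rw [hg, hh, hgh, ContinuousMap.mul_apply]

end MulOp

namespace ComplexRegularBorelMeasure

variable {Ω : Type*} [TopologicalSpace Ω] [MeasurableSpace Ω] (ν : ComplexRegularBorelMeasure Ω)

instance : IsFiniteMeasure ν.variation := ν.finite

instance : ν.variation.Regular := ν.regular

theorem integral_congr_ae {f g : Ω → ℂ} (h : f =ᵐ[ν.variation] g) :
    ν.integral f = ν.integral g :=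
  MeasureTheory.integral_congr_ae (by filter_upwards [h] with x hx; rw [hx])

theorem memLp_conj_polar : MemLp (fun x => conj (ν.polar x)) 2 ν.variation := by
  refine MemLp.of_bound
    (Complex.continuous_conj.measurable.comp ν.measurable_polar).aestronglyMeasurable 1 ?_
  filter_upwards [ν.norm_polar] with x hx
  simp [hx]

noncomputable def conjPolar : Lp ℂ 2 ν.variation :=
  ν.memLp_conj_polar.toLp _

theorem coeFn_conjPolar : ν.conjPolar =ᵐ[ν.variation] fun x => conj (ν.polar x) :=
  ν.memLp_conj_polar.coeFn_toLp

noncomputable def integralL2 : Lp ℂ 2 ν.variation →L[ℂ] ℂ :=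
  innerSL ℂ ν.conjPolar

theorem integralL2_apply (ξ : Lp ℂ 2 ν.variation) : ν.integralL2 ξ = ν.integral ξ := by
  rw [integralL2, innerSL_apply_apply, L2.inner_def, integral]
  refine MeasureTheory.integral_congr_ae ?_
  filter_upwards [ν.coeFn_conjPolar] with x hx
  rw [RCLike.inner_apply, hx, Complex.conj_conj, mul_comm]

variable [CompactSpace Ω] [BorelSpace Ω]

theorem integralL2_toLp (g : C(Ω, ℂ)) :
    ν.integralL2 (ContinuousMap.toLp 2 ν.variation ℂ g) = ν.integral g := by
  rw [integralL2_apply, ν.integral_congr_ae (ContinuousMap.coeFn_toLp ν.variation g)]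

/-- `C(Ω, ℂ)` is dense in `L²(|ν|)`, so `ν.conjPolar` is orthogonal to everything, although it
has modulus one `|ν|`-a.e. -/
theorem variation_eq_zero_of_integral_eq_zero [T2Space Ω] (h : ∀ g : C(Ω, ℂ), ν.integral g = 0) :
    ν.variation = 0 := by
  have hL : ∀ ξ, ν.integralL2 ξ = 0 := fun ξ =>
    (ContinuousMap.toLp_denseRange ℂ ν.variation (p := 2) ℂ ENNReal.ofNat_ne_top).induction_on ξ
      (isClosed_eq ν.integralL2.continuous continuous_const)
      fun g => (ν.integralL2_toLp g).trans (h g)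
  have hk : ν.conjPolar = 0 := inner_self_eq_zero.1 (hL ν.conjPolar)
  have hfalse : ∀ᵐ x ∂ν.variation, False := by
    have hzero := ν.coeFn_conjPolar
    rw [hk] at hzero
    filter_upwards [hzero, Lp.coeFn_zero ℂ 2 ν.variation, ν.norm_polar] with x hx hx_zero hx_norm
    rw [hx_zero] at hx
    simp [← Complex.norm_conj (ν.polar x), ← hx] at hx_norm
  rwa [Filter.eventually_false_iff_eq_bot, ae_eq_bot] at hfalse

end ComplexRegularBorelMeasure

theorem stmt13_general {Ω : Type*} [TopologicalSpace Ω] [CompactSpace Ω] [T2Space Ω]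
    [MeasurableSpace Ω] [BorelSpace Ω] (ν : ComplexRegularBorelMeasure Ω)
    (A : Subalgebra ℂ C(Ω, ℂ))
    (hsep : ∀ x y : Ω, x ≠ y → ∃ f ∈ A, f x ≠ f y)
    (hann : ∀ f ∈ A, ν.integral (⇑f) = 0)
    (P : Lp ℂ 2 ν.variation →L[ℂ] Lp ℂ 2 ν.variation)
    (hrange : ∀ ξ, P ξ ∈ closure {ξ : Lp ℂ 2 ν.variation |
      ∃ f ∈ A, (⇑ξ : Ω → ℂ) =ᵐ[ν.variation] ⇑f})
    (hproj : ∀ ξ ∈ closure {ξ : Lp ℂ 2 ν.variation |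
      ∃ f ∈ A, (⇑ξ : Ω → ℂ) =ᵐ[ν.variation] ⇑f}, P ξ = ξ)
    (hcomm : ∀ f ∈ A, ∀ T : Lp ℂ 2 ν.variation →L[ℂ] Lp ℂ 2 ν.variation,
      IsMulOp ν.variation (⇑f) T → T ∘L P = P ∘L T) :
    ν.variation = 0 := by
  have hS : closure {ξ : Lp ℂ 2 ν.variation | ∃ f ∈ A, (⇑ξ : Ω → ℂ) =ᵐ[ν.variation] ⇑f} ⊆
      (ν.integralL2.ker : Set (Lp ℂ 2 ν.variation)) := by
    refine closure_minimal ?_ ν.integralL2.isClosed_ker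
    rintro ξ ⟨f, hf, hξ⟩
    rw [SetLike.mem_coe, LinearMap.mem_ker, ContinuousLinearMap.coe_coe, ν.integralL2_apply,
      ν.integral_congr_ae hξ, hann f hf]
  have hP : ∀ g : C(Ω, ℂ), Commute (mulOp ν.variation g) P := by
    refine commute_map_of_separatesPoints _ (A := A) (fun x y hxy => ?_)
      fun f hf => hcomm f hf _ (isMulOp_mulOp f)
    obtain ⟨f, hf, hne⟩ := hsep x y hxy
    exact ⟨f, ⟨f, hf, rfl⟩, hne⟩
  set one := ContinuousMap.toLp 2 ν.variation ℂ (1 : C(Ω, ℂ))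
  have hP_one : P one = one :=
    hproj one (subset_closure ⟨1, one_mem A, ContinuousMap.coeFn_toLp ν.variation 1⟩)
  refine ν.variation_eq_zero_of_integral_eq_zero fun g => ?_
  calc ν.integral g = ν.integralL2 (mulOp ν.variation g one) := by
        rw [mulOp_apply_toLp, mul_one, ν.integralL2_toLp]
    _ = ν.integralL2 (P (mulOp ν.variation g one)) := by
        rw [← mul_apply_eq_comp, ← (hP g).eq, mul_apply_eq_comp, hP_one]
    _ = 0 := hS (hrange _)

/-- If a complex regular Borel measure `ν` annihilates a closed unital point-separating
subalgebra `A` of `C(Ω)` and there is a bounded projection from `L²(|ν|)` onto the closure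
of `A` commuting with multiplication by every element of `A`, then `ν = 0`. -/
theorem stmt13 {Ω : Type*} [TopologicalSpace Ω] [CompactSpace Ω] [T2Space Ω]
    [MeasurableSpace Ω] [BorelSpace Ω] (ν : ComplexRegularBorelMeasure Ω)
    (A : Subalgebra ℂ C(Ω, ℂ)) (hA : IsClosed (A : Set C(Ω, ℂ)))
    (hsep : ∀ x y : Ω, x ≠ y → ∃ f ∈ A, f x ≠ f y)
    (hann : ∀ f ∈ A, ν.integral (⇑f) = 0)
    (P : Lp ℂ 2 ν.variation →L[ℂ] Lp ℂ 2 ν.variation)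
    (hrange : ∀ ξ, P ξ ∈ closure {ξ : Lp ℂ 2 ν.variation |
      ∃ f ∈ A, (⇑ξ : Ω → ℂ) =ᵐ[ν.variation] ⇑f})
    (hproj : ∀ ξ ∈ closure {ξ : Lp ℂ 2 ν.variation |
      ∃ f ∈ A, (⇑ξ : Ω → ℂ) =ᵐ[ν.variation] ⇑f}, P ξ = ξ)
    (hcomm : ∀ f ∈ A, ∀ T : Lp ℂ 2 ν.variation →L[ℂ] Lp ℂ 2 ν.variation,
      IsMulOp ν.variation (⇑f) T → T ∘L P = P ∘L T) :
    ν.variation = 0 :=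
  stmt13_general ν A hsep hann P hrange hproj hcomm
end
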